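/- arXiv:1601.00767 — 2 statements merged into one kernel-verified Lean document; each statement's English description precedes it below -/
import Mathlib

section
/- Let A, B : H ⇉ H be monotone operators. Then: (i) for every (z,p) ∈ H × H, G_{A+B}(z,p) ≤ inf_{q ∈ H} [G_A(z,q) + G_B(z,p−q)]; (ii) for every (z,p) ∈ H × H and every λ > 0, G_{λA}(z,p) = λ G_A(z, p/λ); (iii) for every z in the closure of dom A and every p ∈ N_{cl(dom A)}(z), G_A(z,p) ≤ G_A(z,0). -/
open MeasureTheory Set Filter Topology ENNReal RealInnerProductSpace

variable {H : Type*} [NormedAddCommGroup H] [InnerProductSpace ℝ H] [CompleteSpace H]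

/-- A multivalued operator `M : H ⇉ H`, identified with its graph, is monotone. -/
def MonotoneGraph (M : Set (H × H)) : Prop :=
  ∀ p ∈ M, ∀ q ∈ M, (0:ℝ) ≤ ⟪p.1 - q.1, p.2 - q.2⟫

/-- Maximal monotone operator: the graph is not strictly contained in a monotone graph. -/
def MaximalMonotoneGraph (M : Set (H × H)) : Prop :=
  MonotoneGraph M ∧ ∀ N : Set (H × H), MonotoneGraph N → M ⊆ N → N = M

/-- The Brézis–Haraux function `G_M(x,u) = sup_{(y,v) ∈ gph M} ⟨x−y, v−u⟩`. -/
noncomputable def BH (M : Set (H × H)) (x u : H) : EReal :=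
  ⨆ q ∈ M, ((⟪x - q.1, q.2 - u⟫ : ℝ) : EReal)

/-- Value of an extended real in `ℝ≥0∞` (used to express `∫ < +∞` for nonnegative quantities). -/
noncomputable def ennval (x : EReal) : ℝ≥0∞ :=
  if x = ⊤ then ⊤ else ENNReal.ofReal x.toReal

/-- `x` is locally absolutely continuous on `[0,∞)` with derivative `x'`. -/
def LocAC (x x' : ℝ → H) : Prop :=
  (∀ T : ℝ, IntegrableOn x' (Icc 0 T)) ∧
    ∀ t : ℝ, 0 ≤ t → x t = x 0 + ∫ s in (0:ℝ)..t, x' s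

/-- Weak convergence in average of the trajectory `x` to `xlim`. -/
def WeakAvgConv (x : ℝ → H) (xlim : H) : Prop :=
  ∀ y : H, Tendsto (fun t : ℝ => (⟪t⁻¹ • ∫ s in (0:ℝ)..t, x s, y⟫ : ℝ))
    atTop (𝓝 (⟪xlim, y⟫ : ℝ))

/-- Weak convergence of `x(t)` to `xlim` as `t → +∞`. -/
def WeakConv (x : ℝ → H) (xlim : H) : Prop :=
  ∀ y : H, Tendsto (fun t : ℝ => (⟪x t, y⟫ : ℝ)) atTop (𝓝 (⟪xlim, y⟫ : ℝ))

/-- Convexity for `ℝ ∪ {+∞}`-valued (here `EReal`-valued) functions. -/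
def EConvex {E : Type*} [AddCommGroup E] [Module ℝ E] (f : E → EReal) : Prop :=
  ∀ x y : E, ∀ a b : ℝ, 0 ≤ a → 0 ≤ b → a + b = 1 →
    f (a • x + b • y) ≤ (a : EReal) * f x + (b : EReal) * f y

/-- Subdifferential of an extended-real-valued convex function. -/
def ESubdiff (f : H → EReal) (x : H) : Set H :=
  {p : H | ∀ y : H, f x + ((⟪p, y - x⟫ : ℝ) : EReal) ≤ f y}

/-- Graph of the subdifferential operator. -/
def ESubdiffGraph (f : H → EReal) : Set (H × H) :=
  {q : H × H | q.2 ∈ ESubdiff f q.1}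

/-- Graph of the sum of two operators. -/
def GraphSum (A B : Set (H × H)) : Set (H × H) :=
  {q : H × H | ∃ u v : H, (q.1, u) ∈ A ∧ (q.1, v) ∈ B ∧ q.2 = u + v}

/-- Graph of `A + c • B`. -/
def ScaledSum (A B : Set (H × H)) (c : ℝ) : Set (H × H) :=
  {q : H × H | ∃ u v : H, (q.1, u) ∈ A ∧ (q.1, v) ∈ B ∧ q.2 = u + c • v}

/-- Graph of `c • A`. -/
def SmulGraph (c : ℝ) (A : Set (H × H)) : Set (H × H) :=
  {q : H × H | ∃ u : H, (q.1, u) ∈ A ∧ q.2 = c • u}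

/-- Domain of an operator given by its graph. -/
def GraphDom (A : Set (H × H)) : Set H := {x : H | ∃ u : H, (x, u) ∈ A}

/-- Graph of the normal cone operator of a set `C`. -/
def NormalConeGraph (C : Set H) : Set (H × H) :=
  {q : H × H | q.1 ∈ C ∧ ∀ y ∈ C, (⟪q.2, y - q.1⟫ : ℝ) ≤ 0}

/-- Lower semicontinuous hull of an extended-real-valued function. -/
noncomputable def lscHull {E : Type*} [TopologicalSpace E] (f : E → EReal) : E → EReal :=
  fun x => Filter.liminf f (𝓝 x)

/-- Inf-compactness: bounded sublevel sets are relatively compact. -/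
def InfCompact (f : H → EReal) : Prop :=
  ∀ R : ℝ, 0 < R → ∀ l : ℝ, IsCompact (closure {x : H | ‖x‖ ≤ R ∧ f x ≤ (l : EReal)})

/-- Set of global minimizers of `f`. -/
def ArgMin (f : H → EReal) : Set H := {x : H | ∀ y : H, f x ≤ f y}

/-- Set of minimizers of `f` over the set `C`. -/
def ArgMinOn (f : H → EReal) (C : Set H) : Set H := {x ∈ C | ∀ y ∈ C, f x ≤ f y}

/-- Fenchel conjugate of an extended-real-valued function. -/
noncomputable def FConj (f : H → EReal) (p : H) : EReal :=
  ⨆ x : H, (((⟪p, x⟫ : ℝ) : EReal) - f x)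

/-- Support function of a set `C`. -/
noncomputable def SuppFn (C : Set H) (p : H) : EReal :=
  ⨆ x : C, ((⟪p, (x : H)⟫ : ℝ) : EReal)

/-! Each rule already holds term by term under the supremum defining `BH`: for `A + B` the
term splits as a sum of a term for `A` and one for `B`; for `λA` it is `λ` times a term for `A`,
and multiplication by `λ > 0` is an order automorphism of `EReal`, so it commutes with suprema;
for a normal direction `p` the extra summand `⟪p, y - z⟫` is nonpositive. -/

theorem EReal.coe_mul_coe_mul_of_mul_eq_one {c d : ℝ} (hdc : d * c = 1) (x : EReal) :
    (d : EReal) * (c * x) = x := by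
  rw [← mul_assoc, ← EReal.coe_mul, hdc, EReal.coe_one, one_mul]

noncomputable def EReal.mulOrderIso {c : ℝ} (hc : 0 < c) : EReal ≃o EReal where
  toFun x := c * x
  invFun x := (c⁻¹ : ℝ) * x
  left_inv := EReal.coe_mul_coe_mul_of_mul_eq_one (inv_mul_cancel₀ hc.ne')
  right_inv := EReal.coe_mul_coe_mul_of_mul_eq_one (mul_inv_cancel₀ hc.ne')
  map_rel_iff' {x y} := by
    change (c : EReal) * x ≤ c * y ↔ x ≤ y
    refine ⟨fun h => ?_, fun h => mul_le_mul_of_nonneg_left h (by exact_mod_cast hc.le)⟩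
    have hc' : (0 : EReal) ≤ ((c⁻¹ : ℝ) : EReal) := by exact_mod_cast (inv_pos.2 hc).le
    simpa only [EReal.coe_mul_coe_mul_of_mul_eq_one (inv_mul_cancel₀ hc.ne')] using
      mul_le_mul_of_nonneg_left h hc'

theorem EReal.coe_mul_biSup_of_pos {ι : Type*} {s : Set ι} {f : ι → EReal} {c : ℝ}
    (hc : 0 < c) : (c : EReal) * ⨆ i ∈ s, f i = ⨆ i ∈ s, (c : EReal) * f i :=
  (EReal.mulOrderIso hc).map_iSup₂ _

section BrezisHaraux

variable {E : Type*} [NormedAddCommGroup E] [InnerProductSpace ℝ E]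

theorem inner_le_BH {M : Set (E × E)} {q : E × E} (hq : q ∈ M) (x u : E) :
    ((⟪x - q.1, q.2 - u⟫ : ℝ) : EReal) ≤ BH M x u :=
  le_iSup₂_of_le q hq le_rfl

theorem BH_le_iff {M : Set (E × E)} {x u : E} {c : EReal} :
    BH M x u ≤ c ↔ ∀ q ∈ M, ((⟪x - q.1, q.2 - u⟫ : ℝ) : EReal) ≤ c :=
  iSup₂_le_iff

theorem BH_graphSum_le (A B : Set (E × E)) (z p q : E) :
    BH (GraphSum A B) z p ≤ BH A z q + BH B z (p - q) := by
  refine BH_le_iff.2 fun w ⟨u, v, hu, hv, hw⟩ => ?_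
  have hsplit : ⟪z - w.1, w.2 - p⟫ = ⟪z - w.1, u - q⟫ + ⟪z - w.1, v - (p - q)⟫ := by
    rw [← inner_add_right, hw]
    congr 1
    abel
  rw [hsplit, EReal.coe_add]
  exact add_le_add (inner_le_BH (q := (w.1, u)) hu z q) (inner_le_BH (q := (w.1, v)) hv z _)

theorem smulGraph_eq_image (c : ℝ) (A : Set (E × E)) :
    SmulGraph c A = (fun q : E × E => (q.1, c • q.2)) '' A := by
  ext ⟨y, v⟩
  constructor
  · rintro ⟨u, hu, rfl⟩
    exact ⟨(y, u), hu, rfl⟩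
  · rintro ⟨⟨y', u⟩, hu, hyv⟩
    obtain ⟨rfl, rfl⟩ := Prod.mk.inj hyv
    exact ⟨u, hu, rfl⟩

theorem BH_smulGraph {c : ℝ} (hc : 0 < c) (A : Set (E × E)) (z p : E) :
    BH (SmulGraph c A) z p = (c : EReal) * BH A z (c⁻¹ • p) := by
  rw [smulGraph_eq_image, BH, iSup_image, BH, EReal.coe_mul_biSup_of_pos hc]
  refine iSup_congr fun q => iSup_congr fun _ => ?_
  rw [← EReal.coe_mul, ← real_inner_smul_right, smul_sub, smul_inv_smul₀ hc.ne']

theorem BH_le_BH_zero {A : Set (E × E)} {z p : E}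
    (hp : ∀ y ∈ GraphDom A, ⟪p, y - z⟫ ≤ 0) : BH A z p ≤ BH A z 0 := by
  refine BH_le_iff.2 fun w hw => le_trans ?_ (inner_le_BH hw z 0)
  have hnormal : ⟪z - w.1, -p⟫ ≤ 0 := by
    rw [inner_neg_right, ← inner_neg_left, neg_sub, real_inner_comm]
    exact hp w.1 ⟨w.2, hw⟩
  rw [sub_zero, sub_eq_add_neg w.2, inner_add_right]
  exact_mod_cast add_le_of_nonpos_right hnormal

end BrezisHaraux

theorem brezisHaraux_calculus_general
    (A B : Set (H × H)) :
    (∀ z p : H, BH (GraphSum A B) z p ≤ ⨅ q : H, (BH A z q + BH B z (p - q))) ∧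
    (∀ z p : H, ∀ lam : ℝ, 0 < lam →
      BH (SmulGraph lam A) z p = (lam : EReal) * BH A z (lam⁻¹ • p)) ∧
    (∀ z ∈ closure (GraphDom A), ∀ p : H,
      (∀ y ∈ closure (GraphDom A), (⟪p, y - z⟫ : ℝ) ≤ 0) →
      BH A z p ≤ BH A z 0) :=
  ⟨fun z p => le_iInf (BH_graphSum_le A B z p),
    fun z p _ hlam => BH_smulGraph hlam A z p,
    fun _ _ _ hp => BH_le_BH_zero fun y hy => hp y (subset_closure hy)⟩

/-- Calculus rules for the Brézis–Haraux function:
(i) subadditivity with respect to the sum of operators,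
(ii) behavior under positive scaling,
(iii) monotonicity with respect to normal directions to the closure of the domain. -/
theorem brezisHaraux_calculus
    (A B : Set (H × H)) (hA : MonotoneGraph A) (hB : MonotoneGraph B) :
    (∀ z p : H, BH (GraphSum A B) z p ≤ ⨅ q : H, (BH A z q + BH B z (p - q))) ∧
    (∀ z p : H, ∀ lam : ℝ, 0 < lam →
      BH (SmulGraph lam A) z p = (lam : EReal) * BH A z (lam⁻¹ • p)) ∧
    (∀ z ∈ closure (GraphDom A), ∀ p : H,
      (∀ y ∈ closure (GraphDom A), (⟪p, y - z⟫ : ℝ) ≤ 0) →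
      BH A z p ≤ BH A z 0) :=
  brezisHaraux_calculus_general A B
end

section
/- Let A, B : H ⇉ H be maximal monotone operators such that A + N_{cl(dom B)} is maximal monotone and (A + N_{cl(dom B)})^{-1}(0) ≠ ∅. Let ε : [0,+∞) → [0,+∞) be a measurable map such that A + ε(t)B is maximal monotone for every t ≥ 0 and ∫₀^{+∞} ε(t) dt < +∞. Suppose that G_B(z,0) < +∞ for every z ∈ dom A ∩ cl(dom B). Then for every strong global solution x(·) of ẋ(t) + A(x(t)) + ε(t)B(x(t)) ∋ 0 there exists x_∞ ∈ (A + N_{cl(dom B)})^{-1}(0) such that (1/t)∫₀ᵗ x(s) ds converges weakly to x_∞ in H as t → +∞. -/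
open MeasureTheory Set Filter Topology ENNReal RealInnerProductSpace

variable {H : Type*} [NormedAddCommGroup H] [InnerProductSpace ℝ H] [CompleteSpace H]

/-!
Testing the inclusion against a point `(y, w)` of the graph of `M = A + N_{cl(dom B)}`,
monotonicity of `A`, the normal cone inequality and the Brézis–Haraux bound
`⟪y - v, b⟫ ≤ G` for `(v, b) ∈ B` give `⟪ẋ, x - y⟫ ≤ ⟪y - x, w⟫ + G ε` almost everywhere.
Integrating with `‖x t - y‖² - ‖x s - y‖² = 2 ∫ₛᵗ ⟪ẋ, x - y⟫` yields two consequences.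
For a zero `z` of `M` (take `w = 0`), `‖x t - z‖²` decreases up to the integrable error `2 G ε`,
so it converges and the trajectory is bounded. For general `(y, w)`, dividing by `t` gives
`⟪y - σ t, w⟫ ≥ -C / t` for the average `σ t`, so every weak cluster point of `σ` is
monotonically related to the graph of `M`, hence a zero of `M` by maximality.
Opial's argument finishes: for two zeros `z, z'` the quantity `⟪x t, z - z'⟫` converges,
hence so does its Cesàro average, and two weak cluster points of `σ` at `z, z'` force
`‖z - z'‖² = 0`. Bounded sets being weakly compact, `σ` converges weakly.
-/

variable {E : Type*} [NormedAddCommGroup E] [InnerProductSpace ℝ E]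

lemma integral_integral_eq_two_mul_integral_Iic {μ : Measure ℝ} [SFinite μ]
    [NullSingletonClass μ] {K : ℝ → ℝ → ℝ} (hK : Integrable (Function.uncurry K) (μ.prod μ))
    (hsymm : ∀ a b, K a b = K b a) :
    ∫ a, ∫ b, K a b ∂μ ∂μ = 2 * ∫ a, ∫ b in Iic a, K a b ∂μ ∂μ := by
  set lower : ℝ × ℝ → ℝ := {p | p.2 ≤ p.1}.indicator (Function.uncurry K)
  set upper : ℝ × ℝ → ℝ := {p | p.1 < p.2}.indicator (Function.uncurry K)
  have hlower : Integrable lower (μ.prod μ) :=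
    hK.indicator (measurableSet_le measurable_snd measurable_fst)
  have hupper : Integrable upper (μ.prod μ) :=
    hK.indicator (measurableSet_lt measurable_fst measurable_snd)
  have hlower_eq : ∀ a, ∫ b, lower (a, b) ∂μ = ∫ b in Iic a, K a b ∂μ := fun a => by
    rw [← integral_indicator measurableSet_Iic]
    rfl
  have hupper_eq : ∀ b, ∫ a, upper (a, b) ∂μ = ∫ a in Iic b, K b a ∂μ := fun b => by
    rw [← setIntegral_congr_set Iio_ae_eq_Iic, ← integral_indicator measurableSet_Iio]
    congr 1
    funext a
    by_cases h : a < b <;> simp [upper, indicator, h, hsymm a b]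
  calc ∫ a, ∫ b, K a b ∂μ ∂μ
      = ∫ a, ∫ b, lower (a, b) ∂μ ∂μ + ∫ a, ∫ b, upper (a, b) ∂μ ∂μ := by
        rw [← integral_add hlower.integral_prod_left hupper.integral_prod_left]
        refine integral_congr_ae ?_
        filter_upwards [hlower.prod_right_ae, hupper.prod_right_ae] with a hl hu
        rw [← integral_add hl hu]
        congr 1
        funext b
        by_cases h : b ≤ a <;> simp [lower, upper, h, not_le.mp]
    _ = ∫ a, ∫ b in Iic a, K a b ∂μ ∂μ + ∫ b, ∫ a in Iic b, K b a ∂μ ∂μ := by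
        rw [integral_integral_swap (f := fun a b => upper (a, b)) hupper]
        simp only [hlower_eq, hupper_eq]
    _ = 2 * ∫ a, ∫ b in Iic a, K a b ∂μ ∂μ := by ring

lemma norm_setIntegral_Ioc_sq [CompleteSpace E] {f : ℝ → E} {s t : ℝ}
    (hf : IntegrableOn f (Ioc s t)) :
    ‖∫ r in Ioc s t, f r‖ ^ 2 = 2 * ∫ r in Ioc s t, ⟪f r, ∫ τ in Ioc s r, f τ⟫ := by
  set μ := volume.restrict (Ioc s t)
  have hK : Integrable (Function.uncurry fun a b => ⟪f a, f b⟫) (μ.prod μ) :=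
    (hf.norm.mul_prod hf.norm).mono'
      (hf.aestronglyMeasurable.comp_fst.inner hf.aestronglyMeasurable.comp_snd)
      (ae_of_all _ fun p => norm_inner_le_norm (f p.1) (f p.2))
  have hfμ : Integrable f μ := hf
  have hinner : ∀ a, ∫ b, ⟪f a, f b⟫ ∂μ = ⟪∫ r, f r ∂μ, f a⟫ := fun a => by
    rw [integral_inner hfμ, real_inner_comm]
  have hfull : ∫ a, ∫ b, ⟪f a, f b⟫ ∂μ ∂μ = ‖∫ r, f r ∂μ‖ ^ 2 := by
    simp_rw [hinner, integral_inner hfμ, real_inner_self_eq_norm_sq]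
  have hlower : ∀ a ∈ Ioc s t, ∫ b in Iic a, ⟪f a, f b⟫ ∂μ = ⟪f a, ∫ τ in Ioc s a, f τ⟫ :=
    fun a ha => by
      rw [Measure.restrict_restrict measurableSet_Iic, inter_comm, Ioc_inter_Iic,
        min_eq_right ha.2]
      exact integral_inner (hf.mono_set (Ioc_subset_Ioc_right ha.2)) (f a)
  rw [← hfull, integral_integral_eq_two_mul_integral_Iic hK fun a b => real_inner_comm _ _,
    setIntegral_congr_fun measurableSet_Ioc hlower]

lemma MeasureTheory.IntegrableOn.inner_continuousOn {f g : ℝ → E} {a b : ℝ}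
    (hf : IntegrableOn f (Icc a b)) (hg : ContinuousOn g (Icc a b)) :
    IntegrableOn (fun r => ⟪f r, g r⟫) (Icc a b) := by
  obtain ⟨C, hC⟩ := isCompact_Icc.exists_bound_of_continuousOn hg
  refine (hf.norm.mul_const C).mono'
    (hf.aestronglyMeasurable.inner (hg.aestronglyMeasurable measurableSet_Icc)) ?_
  filter_upwards [ae_restrict_mem measurableSet_Icc] with r hr
  exact (norm_inner_le_norm _ _).trans (by gcongr; exact hC r hr)

namespace LocAC

variable {x x' : ℝ → E}

lemma intervalIntegrable_deriv (hx : LocAC x x') {s t : ℝ} (hs : 0 ≤ s) (ht : 0 ≤ t) :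
    IntervalIntegrable x' volume s t :=
  ((hx.1 (max s t)).mono_set
    (uIcc_subset_Icc ⟨hs, le_max_left _ _⟩ ⟨ht, le_max_right _ _⟩)).intervalIntegrable

lemma sub_eq_intervalIntegral (hx : LocAC x x') {s t : ℝ} (hs : 0 ≤ s) (ht : 0 ≤ t) :
    x t - x s = ∫ r in s..t, x' r := by
  rw [hx.2 t ht, hx.2 s hs, add_sub_add_left_eq_sub,
    intervalIntegral.integral_interval_sub_left (hx.intervalIntegrable_deriv le_rfl ht)
      (hx.intervalIntegrable_deriv le_rfl hs)]

lemma continuousOn_Icc (hx : LocAC x x') {T : ℝ} (hT : 0 ≤ T) : ContinuousOn x (Icc 0 T) := by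
  have hprim := intervalIntegral.continuousOn_primitive_interval (μ := volume)
    (by rw [uIcc_of_le hT]; exact hx.1 T)
  rw [uIcc_of_le hT] at hprim
  exact (continuousOn_const.add hprim).congr fun t ht => hx.2 t ht.1

lemma intervalIntegrable (hx : LocAC x x') {t : ℝ} (ht : 0 ≤ t) :
    IntervalIntegrable x volume 0 t :=
  (hx.continuousOn_Icc ht).intervalIntegrable_of_Icc ht

lemma norm_sub_sq_sub_norm_sub_sq [CompleteSpace E] (hx : LocAC x x') (y : E) {s t : ℝ}
    (hs : 0 ≤ s) (hst : s ≤ t) :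
    ‖x t - y‖ ^ 2 - ‖x s - y‖ ^ 2 = 2 * ∫ r in s..t, ⟪x' r, x r - y⟫ := by
  have hf : IntegrableOn x' (Icc s t) := (hx.1 t).mono_set (Icc_subset_Icc_left hs)
  have hxF : ∀ r ∈ Icc s t, x r - y = (x s - y) + ∫ τ in Ioc s r, x' τ := fun r hr => by
    rw [← intervalIntegral.integral_of_le hr.1,
      ← hx.sub_eq_intervalIntegral hs (hs.trans hr.1)]
    abel
  have hFint : IntegrableOn (fun r => ⟪x' r, ∫ τ in Ioc s r, x' τ⟫) (Ioc s t) :=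
    (hf.inner_continuousOn (intervalIntegral.continuousOn_primitive hf)).mono_set
      Ioc_subset_Icc_self
  have hconst : ∫ r in Ioc s t, ⟪x' r, x s - y⟫ = ⟪x s - y, ∫ r in Ioc s t, x' r⟫ := by
    simp_rw [real_inner_comm (x s - y)]
    exact integral_inner (hf.mono_set Ioc_subset_Icc_self) _
  rw [intervalIntegral.integral_of_le hst,
    setIntegral_congr_fun measurableSet_Ioc fun r hr => by
      rw [hxF r (Ioc_subset_Icc_self hr), inner_add_right],
    integral_add ((hf.mono_set Ioc_subset_Icc_self).inner_const _) hFint, hconst,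
    hxF t ⟨hst, le_rfl⟩, norm_add_sq_real,
    norm_setIntegral_Ioc_sq (hf.mono_set Ioc_subset_Icc_self)]
  ring

lemma norm_sub_sq_le [CompleteSpace E] (hx : LocAC x x') {y : E} {g : ℝ → ℝ} {s t : ℝ}
    (hs : 0 ≤ s) (hst : s ≤ t) (hg : IntervalIntegrable g volume s t)
    (hle : ∀ᵐ r, r ∈ Ioc s t → ⟪x' r, x r - y⟫ ≤ g r) :
    ‖x t - y‖ ^ 2 ≤ ‖x s - y‖ ^ 2 + 2 * ∫ r in s..t, g r := by
  have hcont : ContinuousOn (fun r => x r - y) (Icc s t) :=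
    ((hx.continuousOn_Icc (hs.trans hst)).mono (Icc_subset_Icc_left hs)).sub continuousOn_const
  have hint : IntervalIntegrable (fun r => ⟪x' r, x r - y⟫) volume s t := by
    refine IntegrableOn.intervalIntegrable ?_
    rw [uIcc_of_le hst]
    exact ((hx.1 t).mono_set (Icc_subset_Icc_left hs)).inner_continuousOn hcont
  have hmono : ∫ r in s..t, ⟪x' r, x r - y⟫ ≤ ∫ r in s..t, g r := by
    rw [intervalIntegral.integral_of_le hst, intervalIntegral.integral_of_le hst]
    exact setIntegral_mono_ae_restrict hint.1 hg.1 ((ae_restrict_iff' measurableSet_Ioc).2 hle)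
  linarith [hx.norm_sub_sq_sub_norm_sub_sq y hs hst]

end LocAC

section RealAnalysis

variable {e u : ℝ → ℝ}

lemma intervalIntegrable_of_integrableOn_Ici (he : IntegrableOn e (Ici 0)) {a b : ℝ}
    (ha : 0 ≤ a) (hb : 0 ≤ b) : IntervalIntegrable e volume a b :=
  (he.mono_set fun _ hr => (le_min ha hb).trans hr.1).intervalIntegrable

lemma intervalIntegral_le_integral_Ici (he : IntegrableOn e (Ici 0))
    (he0 : ∀ t, 0 ≤ t → 0 ≤ e t) {t : ℝ} (ht : 0 ≤ t) :
    ∫ r in 0..t, e r ≤ ∫ r in Ici 0, e r := by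
  rw [intervalIntegral.integral_of_le ht]
  exact setIntegral_mono_set he ((ae_restrict_iff' measurableSet_Ici).2 (ae_of_all _ he0))
    (Eventually.of_forall fun r hr => hr.1.le)

lemma exists_tendsto_of_le_add_intervalIntegral (hu : ∀ t, 0 ≤ t → 0 ≤ u t)
    (he : IntegrableOn e (Ici 0)) (he0 : ∀ t, 0 ≤ t → 0 ≤ e t)
    (hle : ∀ s t, 0 ≤ s → s ≤ t → u t ≤ u s + ∫ r in s..t, e r) :
    ∃ ℓ, Tendsto u atTop (𝓝 ℓ) := by
  set φ : ℝ → ℝ := fun t => u (max t 0) - ∫ r in 0..max t 0, e r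
  have hφ : Antitone φ := fun a b hab => by
    have ha : 0 ≤ max a 0 := le_max_right a 0
    have hb : 0 ≤ max b 0 := le_max_right b 0
    have h := hle _ _ ha (max_le_max_right 0 hab)
    simp only [φ]
    rw [← intervalIntegral.integral_add_adjacent_intervals
      (intervalIntegrable_of_integrableOn_Ici he le_rfl ha)
      (intervalIntegrable_of_integrableOn_Ici he ha hb)]
    linarith
  have hφb : BddBelow (range φ) := ⟨-∫ r in Ici 0, e r, by
    rintro _ ⟨t, rfl⟩
    linarith [hu _ (le_max_right t 0), intervalIntegral_le_integral_Ici he he0 (le_max_right t 0)]⟩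
  have hE := intervalIntegral_tendsto_integral_Ioi 0 (he.mono_set Ioi_subset_Ici_self) tendsto_id
  refine ⟨_, ((tendsto_atTop_ciInf hφ hφb).add hE).congr' ?_⟩
  filter_upwards [eventually_ge_atTop 0] with t ht
  simp [φ, max_eq_left ht]

lemma tendsto_inv_mul_intervalIntegral {q : ℝ → ℝ} {L : ℝ}
    (hq : ∀ t, 0 ≤ t → IntervalIntegrable q volume 0 t) (h : Tendsto q atTop (𝓝 L)) :
    Tendsto (fun t => t⁻¹ * ∫ r in 0..t, q r) atTop (𝓝 L) := by
  rw [Metric.tendsto_atTop]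
  intro δ hδ
  obtain ⟨T, hT⟩ := eventually_atTop.1 (h.eventually (Metric.closedBall_mem_nhds L (half_pos hδ)))
  set T₀ := max T 0
  have hT₀ : 0 ≤ T₀ := le_max_right T 0
  set C := |∫ r in 0..T₀, (q r - L)|
  refine ⟨max (T₀ + 1) (2 * C / δ + 1), fun t ht => ?_⟩
  have htT₀ : T₀ + 1 ≤ t := (le_max_left _ _).trans ht
  have htC : 2 * C / δ + 1 ≤ t := (le_max_right _ _).trans ht
  have ht0 : 0 < t := by linarith
  have hint : ∀ a b, 0 ≤ a → 0 ≤ b → IntervalIntegrable (fun r => q r - L) volume a b :=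
    fun a b ha hb => (((hq a ha).symm.trans (hq b hb)).sub intervalIntegrable_const)
  have htail : |∫ r in T₀..t, (q r - L)| ≤ δ / 2 * (t - T₀) := by
    have := intervalIntegral.norm_integral_le_of_norm_le_const (a := T₀) (b := t)
      (C := δ / 2) (f := fun r => q r - L) fun r hr => by
        rw [uIoc_of_le (by linarith)] at hr
        exact hT r ((le_max_left T 0).trans hr.1.le)
    rwa [Real.norm_eq_abs, abs_of_nonneg (by linarith : 0 ≤ t - T₀)] at this
  have hsplit : (t⁻¹ * ∫ r in 0..t, q r) - L
      = t⁻¹ * ((∫ r in 0..T₀, (q r - L)) + ∫ r in T₀..t, (q r - L)) := by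
    rw [intervalIntegral.integral_add_adjacent_intervals (hint 0 T₀ le_rfl hT₀)
      (hint T₀ t hT₀ ht0.le), intervalIntegral.integral_sub (hq t ht0.le) intervalIntegrable_const,
      intervalIntegral.integral_const, smul_eq_mul]
    field_simp
    ring
  have hCt : 2 * C ≤ (t - 1) * δ := (div_le_iff₀ hδ).1 (by linarith)
  rw [Real.dist_eq, hsplit, abs_mul, abs_inv, abs_of_pos ht0, inv_mul_lt_iff₀ ht0]
  calc |(∫ r in 0..T₀, (q r - L)) + ∫ r in T₀..t, (q r - L)|
      ≤ C + δ / 2 * (t - T₀) := (abs_add_le _ _).trans (add_le_add le_rfl htail)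
    _ < t * δ := by nlinarith

end RealAnalysis

def WeakTendsto {α : Type*} (g : α → E) (l : Filter α) (z : E) : Prop :=
  ∀ y : E, Tendsto (fun t => ⟪g t, y⟫) l (𝓝 ⟪z, y⟫)

lemma exists_weakTendsto_of_eventually_norm_le [CompleteSpace E] {α : Type*} {g : α → E}
    (U : Ultrafilter α) {R : ℝ} (hg : ∀ᶠ t in (U : Filter α), ‖g t‖ ≤ R) :
    ∃ z, WeakTendsto g U z := by
  have hbound : ∀ y, ∀ᶠ t in (U : Filter α), ‖⟪g t, y⟫‖ ≤ R * ‖y‖ := fun y =>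
    hg.mono fun t ht => (norm_inner_le_norm _ _).trans (by gcongr)
  have hlim : ∀ y : E, ∃ c, Tendsto (fun t => ⟪g t, y⟫) U (𝓝 c) := fun y => by
    obtain ⟨c, -, hc⟩ := (isCompact_closedBall (0 : ℝ) (R * ‖y‖)).ultrafilter_le_nhds
      (U.map fun t => ⟪g t, y⟫)
      (le_principal_iff.2 ((hbound y).mono fun t ht => mem_closedBall_zero_iff.2 ht))
    exact ⟨c, hc⟩
  choose c hc using hlim
  let ℓ : E →ₗ[ℝ] ℝ :=
    { toFun := c
      map_add' := fun y y' => tendsto_nhds_unique (hc (y + y')) <| by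
        simpa only [inner_add_right] using (hc y).add (hc y')
      map_smul' := fun a y => tendsto_nhds_unique (hc (a • y)) <| by
        simpa only [real_inner_smul_right, RingHom.id_apply, smul_eq_mul] using
          (hc y).const_mul a }
  have hℓ : ∀ y, ‖ℓ y‖ ≤ R * ‖y‖ := fun y => le_of_tendsto (hc y).norm (hbound y)
  refine ⟨(InnerProductSpace.toDual ℝ E).symm (ℓ.mkContinuous R hℓ), fun y => ?_⟩
  rw [InnerProductSpace.toDual_symm_apply]
  exact hc y

lemma IntervalIntegrable.inner_const {f : ℝ → E} {a b : ℝ}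
    (hf : IntervalIntegrable f volume a b) (c : E) :
    IntervalIntegrable (fun r => ⟪f r, c⟫) volume a b :=
  ⟨hf.1.inner_const c, hf.2.inner_const c⟩

noncomputable def ergodicAvg (x : ℝ → E) (t : ℝ) : E := t⁻¹ • ∫ s in (0 : ℝ)..t, x s

lemma weakAvgConv_iff {x : ℝ → E} {z : E} :
    WeakAvgConv x z ↔ WeakTendsto (ergodicAvg x) atTop z := Iff.rfl

lemma inner_ergodicAvg [CompleteSpace E] {x : ℝ → E} {t : ℝ}
    (hx : IntervalIntegrable x volume 0 t) (y : E) :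
    ⟪ergodicAvg x t, y⟫ = t⁻¹ * ∫ s in 0..t, ⟪x s, y⟫ := by
  have h := (innerSL ℝ y).intervalIntegral_comp_comm hx
  simp only [innerSL_apply_apply] at h
  simp_rw [ergodicAvg, real_inner_smul_left, real_inner_comm y, h]

lemma intervalIntegral_inner_sub_eq_mul_inner_sub_ergodicAvg [CompleteSpace E] {x : ℝ → E}
    {t : ℝ} (hx : IntervalIntegrable x volume 0 t) (ht : t ≠ 0) (y w : E) :
    ∫ r in 0..t, ⟪y - x r, w⟫ = t * ⟪y - ergodicAvg x t, w⟫ := by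
  simp_rw [inner_sub_left]
  rw [intervalIntegral.integral_sub intervalIntegrable_const (hx.inner_const w),
    intervalIntegral.integral_const,
    inner_ergodicAvg hx, mul_sub, mul_inv_cancel_left₀ ht, sub_zero, smul_eq_mul]

lemma inner_sub_nonneg_of_weakTendsto {g : ℝ → E} {U : Ultrafilter ℝ}
    (hU : (U : Filter ℝ) ≤ atTop) {z y w : E} (hz : WeakTendsto g U z) {C : ℝ}
    (hC : ∀ t, 0 < t → -C ≤ t * ⟪y - g t, w⟫) : 0 ≤ ⟪y - z, w⟫ := by
  have hlow : Tendsto (fun t => -C * t⁻¹) U (𝓝 0) := by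
    simpa using (tendsto_inv_atTop_zero.const_mul (-C)).mono_left hU
  have hlim : Tendsto (fun t => ⟪y - g t, w⟫) U (𝓝 ⟪y - z, w⟫) := by
    simpa only [inner_sub_left] using tendsto_const_nhds.sub (hz w)
  refine le_of_tendsto_of_tendsto hlow hlim (hU ((eventually_gt_atTop 0).mono fun t ht => ?_))
  show -C * t⁻¹ ≤ ⟪y - g t, w⟫
  rw [← div_eq_mul_inv, div_le_iff₀ ht, mul_comm]
  exact hC t ht

lemma norm_ergodicAvg_le {x : ℝ → E} {R : ℝ} (hx : ∀ t, 0 ≤ t → ‖x t‖ ≤ R) {t : ℝ}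
    (ht : 0 < t) : ‖ergodicAvg x t‖ ≤ R := by
  have h := intervalIntegral.norm_integral_le_of_norm_le_const (a := 0) (b := t) (f := x)
    fun s hs => hx s (by rw [uIoc_of_le ht.le] at hs; exact hs.1.le)
  rw [ergodicAvg, norm_smul, norm_inv, Real.norm_of_nonneg ht.le, inv_mul_le_iff₀ ht]
  rwa [sub_zero, abs_of_pos ht, mul_comm] at h

lemma eq_of_weakTendsto_ergodicAvg [CompleteSpace E] {x : ℝ → E}
    (hint : ∀ t, 0 ≤ t → IntervalIntegrable x volume 0 t) {z z' : E} {ℓ ℓ' : ℝ}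
    (hℓ : Tendsto (fun t => ‖x t - z‖ ^ 2) atTop (𝓝 ℓ))
    (hℓ' : Tendsto (fun t => ‖x t - z'‖ ^ 2) atTop (𝓝 ℓ')) {U U' : Ultrafilter ℝ}
    (hU : (U : Filter ℝ) ≤ atTop) (hU' : (U' : Filter ℝ) ≤ atTop)
    (hz : WeakTendsto (ergodicAvg x) U z) (hz' : WeakTendsto (ergodicAvg x) U' z') : z = z' := by
  have hpol : ∀ t, ⟪x t, z - z'⟫ = (‖x t - z'‖ ^ 2 - ‖x t - z‖ ^ 2 + ‖z‖ ^ 2 - ‖z'‖ ^ 2) / 2 :=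
    fun t => by
      rw [norm_sub_sq_real, norm_sub_sq_real, inner_sub_right]
      ring
  have hcesaro := tendsto_inv_mul_intervalIntegral
    (fun t ht => (hint t ht).inner_const (z - z'))
    ((((hℓ'.sub hℓ).add_const _).sub_const _).div_const 2 |>.congr fun t => (hpol t).symm)
  have havg : Tendsto (fun t => ⟪ergodicAvg x t, z - z'⟫) atTop _ :=
    hcesaro.congr' ((eventually_ge_atTop 0).mono fun t ht => (inner_ergodicAvg (hint t ht) _).symm)
  have hzz' : ⟪z - z', z - z'⟫ = 0 := by
    rw [inner_sub_left, tendsto_nhds_unique (hz _) (havg.mono_left hU),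
      tendsto_nhds_unique (hz' _) (havg.mono_left hU'), sub_self]
  exact sub_eq_zero.1 (inner_self_eq_zero.1 hzz')

/-- Opial's lemma for ergodic averages. -/
theorem exists_weakTendsto_ergodicAvg [CompleteSpace E] {x : ℝ → E} {S : Set E} {R : ℝ}
    (hint : ∀ t, 0 ≤ t → IntervalIntegrable x volume 0 t) (hbdd : ∀ t, 0 ≤ t → ‖x t‖ ≤ R)
    (hlim : ∀ z ∈ S, ∃ ℓ, Tendsto (fun t => ‖x t - z‖ ^ 2) atTop (𝓝 ℓ))
    (hclus : ∀ (U : Ultrafilter ℝ) (z : E), (U : Filter ℝ) ≤ atTop →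
      WeakTendsto (ergodicAvg x) U z → z ∈ S) :
    ∃ z ∈ S, WeakTendsto (ergodicAvg x) atTop z := by
  have hex : ∀ U : Ultrafilter ℝ, (U : Filter ℝ) ≤ atTop →
      ∃ z ∈ S, WeakTendsto (ergodicAvg x) U z := fun U hU => by
    obtain ⟨z, hz⟩ := exists_weakTendsto_of_eventually_norm_le U
      (hU ((eventually_gt_atTop 0).mono fun t ht => norm_ergodicAvg_le hbdd ht))
    exact ⟨z, hclus U z hU hz, hz⟩
  obtain ⟨z, hzS, hz⟩ := hex (Ultrafilter.of atTop) (Ultrafilter.of_le _)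
  obtain ⟨ℓ, hℓ⟩ := hlim z hzS
  refine ⟨z, hzS, fun y => (tendsto_iff_ultrafilter _ _ _).2 fun U hU => ?_⟩
  obtain ⟨z', hz'S, hz'⟩ := hex U hU
  obtain ⟨ℓ', hℓ'⟩ := hlim z' hz'S
  rw [eq_of_weakTendsto_ergodicAvg hint hℓ hℓ' (Ultrafilter.of_le _) hU hz hz']
  exact hz' y

lemma exists_inner_le_of_BH_ne_top {B : Set (E × E)} {y u : E} (h : BH B y u ≠ ⊤) :
    ∃ G, 0 ≤ G ∧ ∀ q ∈ B, ⟪y - q.1, q.2 - u⟫ ≤ G := by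
  refine ⟨max (BH B y u).toReal 0, le_max_right _ _, fun q hq => le_max_of_le_left ?_⟩
  have hq : ((⟪y - q.1, q.2 - u⟫ : ℝ) : EReal) ≤ BH B y u :=
    le_biSup (f := fun q : E × E => ((⟪y - q.1, q.2 - u⟫ : ℝ) : EReal)) hq
  simpa using EReal.toReal_le_toReal hq (EReal.coe_ne_bot _) h

lemma MaximalMonotoneGraph.mem_of_forall_inner_nonneg {M : Set (E × E)}
    (hM : MaximalMonotoneGraph M) {z u : E} (h : ∀ p ∈ M, 0 ≤ ⟪p.1 - z, p.2 - u⟫) :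
    (z, u) ∈ M := by
  have hmono : MonotoneGraph (insert (z, u) M) := by
    rintro p (rfl | hp) q (rfl | hq)
    · simp
    · have h' := h q hq
      rwa [← inner_neg_neg, neg_sub, neg_sub] at h'
    · exact h p hp
    · exact hM.1 p hp q hq
  exact hM.2 _ hmono (subset_insert _ _) ▸ mem_insert _ _

lemma inner_le_of_mem_scaledSum {A B : Set (E × E)} (hA : MonotoneGraph A) {c G : ℝ}
    (hc : 0 ≤ c) {z v y w : E} (hzv : (z, v) ∈ ScaledSum A B c)
    (hyw : (y, w) ∈ GraphSum A (NormalConeGraph (closure (GraphDom B))))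
    (hG : ∀ q ∈ B, ⟪y - q.1, q.2⟫ ≤ G) :
    ⟪w, z - y⟫ ≤ ⟪v, z - y⟫ + c * G := by
  obtain ⟨a, b, ha, hb, rfl⟩ := hzv
  obtain ⟨a', p, ha', hp, rfl⟩ := hyw
  have hmono : 0 ≤ ⟪z - y, a - a'⟫ := hA _ ha _ ha'
  have hnormal : ⟪p, z - y⟫ ≤ 0 := hp.2 z (subset_closure ⟨b, hb⟩)
  have hBH : c * ⟪y - z, b⟫ ≤ c * G := mul_le_mul_of_nonneg_left (hG _ hb) hc
  rw [inner_sub_right, real_inner_comm a, real_inner_comm a'] at hmono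
  rw [← neg_sub z y, inner_neg_left, real_inner_comm] at hBH
  rw [inner_add_left, inner_add_left, real_inner_smul_left]
  linarith

section Trajectories

variable [CompleteSpace E] {A B : Set (E × E)} {ε : ℝ → ℝ} {x x' : ℝ → E}

lemma norm_sub_sq_le_of_solution (hA : MonotoneGraph A) (hε0 : ∀ t, 0 ≤ t → 0 ≤ ε t)
    (hεi : IntegrableOn ε (Ici 0)) (hx : LocAC x x')
    (hsol : ∀ᵐ t ∂(volume.restrict (Ioi (0:ℝ))), (x t, -x' t) ∈ ScaledSum A B (ε t))
    {y w : E} (hyw : (y, w) ∈ GraphSum A (NormalConeGraph (closure (GraphDom B)))) {G : ℝ}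
    (hG : ∀ q ∈ B, ⟪y - q.1, q.2⟫ ≤ G) {s t : ℝ} (hs : 0 ≤ s) (hst : s ≤ t) :
    ‖x t - y‖ ^ 2 ≤ ‖x s - y‖ ^ 2 + 2 * ∫ r in s..t, (⟪y - x r, w⟫ + G * ε r) := by
  have hcont : ContinuousOn (fun r => ⟪y - x r, w⟫) (uIcc s t) := by
    rw [uIcc_of_le hst]
    exact (continuousOn_const.sub ((hx.continuousOn_Icc (hs.trans hst)).mono
      (Icc_subset_Icc_left hs))).inner continuousOn_const
  refine hx.norm_sub_sq_le hs hst (hcont.intervalIntegrable.add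
    ((intervalIntegrable_of_integrableOn_Ici hεi hs (hs.trans hst)).const_mul G)) ?_
  filter_upwards [(ae_restrict_iff' measurableSet_Ioi).1 hsol] with r hr hrI
  have h := inner_le_of_mem_scaledSum hA (hε0 r (hs.trans hrI.1.le))
    (hr (hs.trans_lt hrI.1)) hyw hG
  rw [inner_neg_left] at h
  rw [← neg_sub (x r) y, inner_neg_left, real_inner_comm w]
  linarith

lemma exists_tendsto_norm_sub_sq_of_solution (hA : MonotoneGraph A)
    (hε0 : ∀ t, 0 ≤ t → 0 ≤ ε t) (hεi : IntegrableOn ε (Ici 0)) (hx : LocAC x x')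
    (hsol : ∀ᵐ t ∂(volume.restrict (Ioi (0:ℝ))), (x t, -x' t) ∈ ScaledSum A B (ε t))
    {z : E} (hz : (z, 0) ∈ GraphSum A (NormalConeGraph (closure (GraphDom B)))) {G : ℝ}
    (hG0 : 0 ≤ G) (hG : ∀ q ∈ B, ⟪z - q.1, q.2⟫ ≤ G) :
    ∃ ℓ, Tendsto (fun t => ‖x t - z‖ ^ 2) atTop (𝓝 ℓ) := by
  refine exists_tendsto_of_le_add_intervalIntegral (e := fun r => 2 * G * ε r)
    (fun t _ => sq_nonneg _) (hεi.const_mul _)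
    (fun t ht => mul_nonneg (by positivity) (hε0 t ht)) fun s t hs hst => ?_
  have h := norm_sub_sq_le_of_solution hA hε0 hεi hx hsol hz hG hs hst
  simpa only [inner_zero_right, zero_add, intervalIntegral.integral_const_mul, mul_assoc] using h

lemma norm_le_of_solution (hA : MonotoneGraph A)
    (hε0 : ∀ t, 0 ≤ t → 0 ≤ ε t) (hεi : IntegrableOn ε (Ici 0)) (hx : LocAC x x')
    (hsol : ∀ᵐ t ∂(volume.restrict (Ioi (0:ℝ))), (x t, -x' t) ∈ ScaledSum A B (ε t))
    {z : E} (hz : (z, 0) ∈ GraphSum A (NormalConeGraph (closure (GraphDom B)))) {G : ℝ}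
    (hG0 : 0 ≤ G) (hG : ∀ q ∈ B, ⟪z - q.1, q.2⟫ ≤ G) {t : ℝ} (ht : 0 ≤ t) :
    ‖x t‖ ≤ ‖z‖ + √(‖x 0 - z‖ ^ 2 + 2 * (G * ∫ r in Ici 0, ε r)) := by
  have h := norm_sub_sq_le_of_solution hA hε0 hεi hx hsol hz hG le_rfl ht
  simp only [inner_zero_right, zero_add, intervalIntegral.integral_const_mul] at h
  have hε := mul_le_mul_of_nonneg_left (intervalIntegral_le_integral_Ici hεi hε0 ht) hG0
  calc ‖x t‖ ≤ ‖z‖ + ‖x t - z‖ := norm_le_norm_add_norm_sub' (x t) z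
    _ ≤ _ := by
      gcongr
      simpa using Real.abs_le_sqrt (h.trans (by linarith))

lemma zero_mem_of_weakTendsto_ergodicAvg (hA : MonotoneGraph A)
    (hε0 : ∀ t, 0 ≤ t → 0 ≤ ε t) (hεi : IntegrableOn ε (Ici 0)) (hx : LocAC x x')
    (hsol : ∀ᵐ t ∂(volume.restrict (Ioi (0:ℝ))), (x t, -x' t) ∈ ScaledSum A B (ε t))
    (hmax : MaximalMonotoneGraph (GraphSum A (NormalConeGraph (closure (GraphDom B)))))
    (hG : ∀ p ∈ GraphSum A (NormalConeGraph (closure (GraphDom B))),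
      ∃ G, 0 ≤ G ∧ ∀ q ∈ B, ⟪p.1 - q.1, q.2⟫ ≤ G)
    {U : Ultrafilter ℝ} (hU : (U : Filter ℝ) ≤ atTop) {z : E}
    (hz : WeakTendsto (ergodicAvg x) U z) :
    (z, 0) ∈ GraphSum A (NormalConeGraph (closure (GraphDom B))) := by
  refine hmax.mem_of_forall_inner_nonneg fun p hp => ?_
  obtain ⟨G, hG0, hpG⟩ := hG p hp
  rw [sub_zero]
  refine inner_sub_nonneg_of_weakTendsto hU hz
    (C := ‖x 0 - p.1‖ ^ 2 / 2 + G * ∫ r in Ici 0, ε r) fun t ht => ?_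
  have h := norm_sub_sq_le_of_solution hA hε0 hεi hx hsol hp hpG le_rfl ht.le
  rw [intervalIntegral.integral_add
      ((intervalIntegrable_const.sub (hx.intervalIntegrable ht.le)).inner_const p.2)
      ((intervalIntegrable_of_integrableOn_Ici hεi le_rfl ht.le).const_mul G),
    intervalIntegral_inner_sub_eq_mul_inner_sub_ergodicAvg (hx.intervalIntegrable ht.le) ht.ne',
    intervalIntegral.integral_const_mul] at h
  have hε := mul_le_mul_of_nonneg_left (intervalIntegral_le_integral_Ici hεi hε0 ht.le) hG0
  nlinarith [sq_nonneg ‖x t - p.1‖]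

end Trajectories

theorem weak_ergodic_convergence_fast_eps_general
    (A B : Set (H × H)) (hA : MaximalMonotoneGraph A)
    (hmaxANB : MaximalMonotoneGraph (GraphSum A (NormalConeGraph (closure (GraphDom B)))))
    (hSne : ∃ z : H, (z, 0) ∈ GraphSum A (NormalConeGraph (closure (GraphDom B))))
    (ε : ℝ → ℝ) (hεmeas : Measurable ε) (hεnonneg : ∀ t : ℝ, 0 ≤ t → 0 ≤ ε t)
    (hεint : ∫⁻ t in Ici (0:ℝ), ENNReal.ofReal (ε t) < ⊤)
    (hGfin : ∀ z ∈ GraphDom A ∩ closure (GraphDom B), BH B z 0 ≠ ⊤)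
    (x x' : ℝ → H) (hx : LocAC x x')
    (hsol : ∀ᵐ t ∂(volume.restrict (Ioi (0:ℝ))), (x t, -x' t) ∈ ScaledSum A B (ε t)) :
    ∃ xlim : H, (xlim, 0) ∈ GraphSum A (NormalConeGraph (closure (GraphDom B))) ∧
      WeakAvgConv x xlim := by
  have hεi : IntegrableOn ε (Ici 0) := (lintegral_ofReal_ne_top_iff_integrable
    hεmeas.aestronglyMeasurable ((ae_restrict_iff' measurableSet_Ici).2 (ae_of_all _ hεnonneg))).1
    hεint.ne
  have hG : ∀ p ∈ GraphSum A (NormalConeGraph (closure (GraphDom B))),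
      ∃ G, 0 ≤ G ∧ ∀ q ∈ B, ⟪p.1 - q.1, q.2⟫ ≤ G := by
    rintro ⟨y, w⟩ ⟨u, p, hu, hp, -⟩
    obtain ⟨G, hG0, hG⟩ := exists_inner_le_of_BH_ne_top (hGfin y ⟨⟨u, hu⟩, hp.1⟩)
    exact ⟨G, hG0, fun q hq => by simpa using hG q hq⟩
  obtain ⟨z₀, hz₀⟩ := hSne
  obtain ⟨G₀, hG₀, hz₀G⟩ := hG _ hz₀
  simp only [weakAvgConv_iff]
  exact exists_weakTendsto_ergodicAvg (fun t ht => hx.intervalIntegrable ht)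
    (fun t ht => norm_le_of_solution hA.1 hεnonneg hεi hx hsol hz₀ hG₀ hz₀G ht)
    (fun z hz => let ⟨G, hG0, hzG⟩ := hG _ hz
      exists_tendsto_norm_sub_sq_of_solution hA.1 hεnonneg hεi hx hsol hz hG0 hzG)
    (fun U z hU hz =>
      zero_mem_of_weakTendsto_ergodicAvg hA.1 hεnonneg hεi hx hsol hmaxANB hG hU hz)

/-- Weak ergodic convergence for `ẋ(t) + A(x(t)) + ε(t) B(x(t)) ∋ 0`
with a fast decaying parameter (`∫ ε < ∞`), toward a zero of `A + N_{cl(dom B)}`. -/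
theorem weak_ergodic_convergence_fast_eps
    (A B : Set (H × H)) (hA : MaximalMonotoneGraph A) (hB : MaximalMonotoneGraph B)
    (hmaxANB : MaximalMonotoneGraph (GraphSum A (NormalConeGraph (closure (GraphDom B)))))
    (hSne : ∃ z : H, (z, 0) ∈ GraphSum A (NormalConeGraph (closure (GraphDom B))))
    (ε : ℝ → ℝ) (hεmeas : Measurable ε) (hεnonneg : ∀ t : ℝ, 0 ≤ t → 0 ≤ ε t)
    (hmaxt : ∀ t : ℝ, 0 ≤ t → MaximalMonotoneGraph (ScaledSum A B (ε t)))
    (hεint : ∫⁻ t in Ici (0:ℝ), ENNReal.ofReal (ε t) < ⊤)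
    (hGfin : ∀ z ∈ GraphDom A ∩ closure (GraphDom B), BH B z 0 ≠ ⊤)
    (x x' : ℝ → H) (hx : LocAC x x')
    (hsol : ∀ᵐ t ∂(volume.restrict (Ioi (0:ℝ))), (x t, -x' t) ∈ ScaledSum A B (ε t)) :
    ∃ xlim : H, (xlim, 0) ∈ GraphSum A (NormalConeGraph (closure (GraphDom B))) ∧
      WeakAvgConv x xlim :=
  weak_ergodic_convergence_fast_eps_general A B hA hmaxANB hSne ε hεmeas hεnonneg hεint hGfin x x'
    hx hsol
end
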